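/- For every nonnegative integer n, the expansion in rising factorials CP_n^{(k)}(x;λ,μ) = Σ_{m=0}^{n} (-1)^m C(n,m) CP_{n-m}^{(k)}(0;λ,μ) · x^{(m)} holds, where x^{(m)} = x(x+1)···(x+m-1). -/

import Mathlib

open PowerSeries Finset

noncomputable section

/-- The formal power series log(1+t). -/
def logS : PowerSeries ℝ :=
  PowerSeries.mk fun n => if n = 0 then 0 else (-1) ^ (n + 1) / n

/-- Composition of formal power series (valid when `g` has zero constant term). -/
def compS (f g : PowerSeries ℝ) : PowerSeries ℝ :=
  PowerSeries.mk fun n =>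
    ∑ m ∈ Finset.range (n + 1), (PowerSeries.coeff (R := ℝ) m f) * PowerSeries.coeff (R := ℝ) n (g ^ m)

/-- The formal power series (1+t)^x = Σ (x)_n t^n / n!. -/
def onePow (x : ℝ) : PowerSeries ℝ :=
  PowerSeries.mk fun n => (descPochhammer ℝ n).eval x / n.factorial

/-- The polylogarithm factorial function Lif_k(t) = Σ t^n/(n!(n+1)^k). -/
def Lif (k : ℤ) : PowerSeries ℝ :=
  PowerSeries.mk fun n => 1 / (n.factorial * ((n : ℝ) + 1) ^ k)

/-- The Peters factor (1+(1+t)^λ)^(-μ) = 2^(-μ) exp(-μ log(1 + ((1+t)^λ - 1)/2)). -/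
def peters (lam mu : ℝ) : PowerSeries ℝ :=
  PowerSeries.C (R := ℝ) ((2 : ℝ) ^ (-mu)) *
    compS (PowerSeries.exp ℝ)
      (PowerSeries.C (R := ℝ) (-mu) * compS logS (PowerSeries.C (R := ℝ) (1 / 2) * (onePow lam - 1)))

/-- The Peters polynomials S_n(x;λ,μ). -/
def petersPoly (lam mu x : ℝ) (n : ℕ) : ℝ :=
  n.factorial * PowerSeries.coeff (R := ℝ) n (peters lam mu * onePow x)

/-- Poly-Cauchy polynomials of the first kind C_n^{(k)}(x). -/
def pC (k : ℤ) (x : ℝ) (n : ℕ) : ℝ :=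
  n.factorial * PowerSeries.coeff (R := ℝ) n (compS (Lif k) logS * onePow (-x))

/-- Poly-Cauchy polynomials of the second kind Ĉ_n^{(k)}(x). -/
def pChat (k : ℤ) (x : ℝ) (n : ℕ) : ℝ :=
  n.factorial * PowerSeries.coeff (R := ℝ) n (compS (Lif k) (-logS) * onePow x)

/-- The poly-Cauchy of the first kind and Peters mixed-type polynomials CP_n^{(k)}(x;λ,μ). -/
def CP (k : ℤ) (lam mu x : ℝ) (n : ℕ) : ℝ :=
  n.factorial * PowerSeries.coeff (R := ℝ) n (peters lam mu * compS (Lif k) logS * onePow (-x))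

/-- The poly-Cauchy of the second kind and Peters mixed-type polynomials ĈP_n^{(k)}(x;λ,μ). -/
def CPhat (k : ℤ) (lam mu x : ℝ) (n : ℕ) : ℝ :=
  n.factorial * PowerSeries.coeff (R := ℝ) n (peters lam mu * compS (Lif k) (-logS) * onePow x)

/-- Signed Stirling numbers of the first kind: (x)_n = Σ_l s(n,l) x^l. -/
def stirS (n l : ℕ) : ℝ := (descPochhammer ℝ n).coeff l

/-! The generating function of `CP(x)` is that of `CP(0)` times `(1+t)^{-x}`, whose exponential
coefficients are `(-x)_m = (-1)^m x^{(m)}`; multiplying exponential generating functions is a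
binomial convolution of their coefficients. -/

theorem descPochhammer_eval_neg {R : Type*} [CommRing R] (x : R) (m : ℕ) :
    (descPochhammer R m).eval (-x) = (-1) ^ m * (ascPochhammer R m).eval x := by
  rw [← neg_neg x, ascPochhammer_eval_neg_eq_descPochhammer, neg_neg, ← mul_assoc, ← mul_pow,
    neg_one_mul, neg_neg, one_pow, one_mul]

theorem factorial_mul_coeff_mul {R : Type*} [CommSemiring R] (f g : R⟦X⟧) (n : ℕ) :
    (n.factorial : R) * coeff n (f * g) =
      ∑ m ∈ range (n + 1), (n.choose m : R) * (m.factorial * coeff m f) *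
        ((n - m).factorial * coeff (n - m) g) := by
  rw [coeff_mul, Nat.sum_antidiagonal_eq_sum_range_succ_mk, mul_sum]
  refine sum_congr rfl fun m hm => ?_
  have hfac : (n.choose m : R) * m.factorial * (n - m).factorial = n.factorial := by
    rw [← Nat.cast_mul, ← Nat.cast_mul,
      Nat.choose_mul_factorial_mul_factorial (Nat.lt_succ_iff.mp (mem_range.mp hm))]
  rw [← hfac]
  ring

theorem factorial_mul_coeff_onePow (x : ℝ) (m : ℕ) :
    (m.factorial : ℝ) * coeff m (onePow x) = (descPochhammer ℝ m).eval x := by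
  rw [onePow, coeff_mk, mul_div_cancel₀ _ (Nat.cast_ne_zero.mpr m.factorial_ne_zero)]

theorem onePow_zero : onePow 0 = 1 := by
  ext n
  rcases n with _ | n <;> simp [onePow, coeff_one]

theorem CP_zero (k : ℤ) (lam mu : ℝ) (n : ℕ) :
    CP k lam mu 0 n = n.factorial * coeff n (peters lam mu * compS (Lif k) logS) := by
  rw [CP, neg_zero, onePow_zero, mul_one]

theorem CP_eq_sum_risingFactorial (k : ℤ) (lam mu x : ℝ) (n : ℕ) :
    CP k lam mu x n =
      ∑ m ∈ Finset.range (n + 1),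
        (-1 : ℝ) ^ m * (n.choose m : ℝ) * CP k lam mu 0 (n - m) *
          (ascPochhammer ℝ m).eval x := by
  rw [CP, mul_comm _ (onePow (-x)), factorial_mul_coeff_mul]
  refine sum_congr rfl fun m _ => ?_
  rw [factorial_mul_coeff_onePow, descPochhammer_eval_neg, ← CP_zero]
  ring
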